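/- arXiv:1206.3817 — 4 statements merged into one kernel-verified Lean document; each statement's English description precedes it below -/
import Mathlib

section
/- Uniqueness of solutions to the extended Skorokhod problem in a time-dependent interval: Let l, r : [0,∞) → [-∞,∞) and (-∞,∞] respectively be càdlàg with l(t) ≤ r(t) for all t, and let ψ : [0,∞) → ℝ be càdlàg. If (φ₁, η₁) and (φ₂, η₂) both satisfy: (i) φ(t) = ψ(t) + η(t) ∈ [l(t), r(t)] for all t; (ii) η is nondecreasing on intervals (s,t] where φ < r throughout, and nonincreasing on intervals where φ > l throughout; (iii) η(t) - η(t-) ≥ 0 if φ(t) < r(t), and η(t) - η(t-) ≤ 0 if φ(t) > l(t) (with η(0-) := 0), then φ₁ = φ₂ and η₁ = η₂. -/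
open Filter Set

/-- `f : ℝ → ℝ` is càdlàg on `[0,∞)`: right-continuous everywhere on `[0,∞)` and
with left limits at every `t > 0`. -/
def Cadlag (f : ℝ → ℝ) : Prop :=
  (∀ t : ℝ, 0 ≤ t → ContinuousWithinAt f (Ici t) t) ∧
  (∀ t : ℝ, 0 < t → ∃ L : ℝ, Tendsto f (nhdsWithin t (Iio t)) (nhds L))

/-- `(φ, η)` solves the extended Skorokhod problem in the time-dependent interval
`[l(t), r(t)]` for the input `ψ`, in the sense of Burdzy–Kang–Ramanan:
(i) `φ = ψ + η ∈ [l, r]`; (ii) `η` is nondecreasing on intervals `(s,t]` where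
`φ < r` throughout, nonincreasing on intervals where `φ > l` throughout;
(iii) the jump `η(t) - η(t-)` is `≥ 0` if `φ(t) < r(t)` and `≤ 0` if `φ(t) > l(t)`,
with the convention `η(0-) = 0`. -/
def SolvesESP (l r : ℝ → EReal) (ψ φ η : ℝ → ℝ) : Prop :=
  (∀ t : ℝ, 0 ≤ t →
      φ t = ψ t + η t ∧ l t ≤ (φ t : EReal) ∧ (φ t : EReal) ≤ r t) ∧
  (∀ s t : ℝ, 0 ≤ s → s ≤ t →
      (∀ u : ℝ, s < u → u ≤ t → (φ u : EReal) < r u) → η s ≤ η t) ∧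
  (∀ s t : ℝ, 0 ≤ s → s ≤ t →
      (∀ u : ℝ, s < u → u ≤ t → l u < (φ u : EReal)) → η t ≤ η s) ∧
  (((φ 0 : EReal) < r 0 → 0 ≤ η 0) ∧ (l 0 < (φ 0 : EReal) → η 0 ≤ 0)) ∧
  (∀ t : ℝ, 0 < t → ∀ L : ℝ, Tendsto η (nhdsWithin t (Iio t)) (nhds L) →
      ((φ t : EReal) < r t → L ≤ η t) ∧ (l t < (φ t : EReal) → η t ≤ L))

/-!
If `(φ₁, η₁)` and `(φ₂, η₂)` both solve the problem for the same input, then `φ₁ - φ₂ = η₁ - η₂`.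
Wherever `θ := η₁ - η₂` is positive, `φ₁ > φ₂ ≥ l` and `φ₂ < φ₁ ≤ r`, so `η₁` can only decrease
and `η₂` can only increase, both continuously and by jumps. Hence `θ`, which starts at `θ 0 ≤ 0`,
can never become positive: at the last time `σ` before an excursion above `ε > 0`, either
`θ σ ≤ ε` and `θ` decreases afterwards, or `θ σ > ε` and `θ` must have jumped up at `σ`.
By symmetry `θ = 0`.
-/

open Topology

def HasLeftLimits (f : ℝ → ℝ) : Prop :=
  ∀ t : ℝ, 0 < t → ∃ L : ℝ, Tendsto f (𝓝[<] t) (𝓝 L)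

theorem Cadlag.hasLeftLimits {f : ℝ → ℝ} (hf : Cadlag f) : HasLeftLimits f := hf.2

theorem HasLeftLimits.sub {f g : ℝ → ℝ} (hf : HasLeftLimits f) (hg : HasLeftLimits g) :
    HasLeftLimits (f - g) := fun t ht ↦ by
  obtain ⟨L, hL⟩ := hf t ht
  obtain ⟨M, hM⟩ := hg t ht
  exact ⟨L - M, hL.sub hM⟩

/-- `σ` is the supremum of the times in `[0, t]` at which `θ ≤ ε`. -/
theorem exists_last_time_le {θ : ℝ → ℝ} {ε t : ℝ} (ht : 0 ≤ t) (h0 : θ 0 ≤ ε) :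
    ∃ σ ∈ Icc 0 t, (∀ u ∈ Ioc σ t, ε < θ u) ∧ (θ σ ≤ ε ∨ ∃ᶠ s in 𝓝[<] σ, θ s ≤ ε) := by
  set S : Set ℝ := {s | s ∈ Icc 0 t ∧ θ s ≤ ε}
  have h0S : (0 : ℝ) ∈ S := ⟨⟨le_rfl, ht⟩, h0⟩
  have hbdd : BddAbove S := ⟨t, fun s hs ↦ hs.1.2⟩
  have hσ0 : 0 ≤ sSup S := le_csSup hbdd h0S
  refine ⟨sSup S, ⟨hσ0, csSup_le ⟨0, h0S⟩ fun s hs ↦ hs.1.2⟩, fun u hu ↦ ?_, ?_⟩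
  · by_contra! hθu
    exact hu.1.not_ge (le_csSup hbdd ⟨⟨hσ0.trans hu.1.le, hu.2⟩, hθu⟩)
  · refine or_iff_not_imp_left.2 fun hσS ↦ frequently_iff.2 fun {U} hU ↦ ?_
    obtain ⟨a, ha, haU⟩ := (mem_nhdsLT_iff_exists_Ioo_subset).1 hU
    obtain ⟨s, hsS, has⟩ := exists_lt_of_lt_csSup ⟨0, h0S⟩ ha
    have hsσ : s < sSup S :=
      (le_csSup hbdd hsS).lt_of_ne fun h ↦ hσS (h ▸ hsS.2)
    exact ⟨s, haU ⟨has, hsσ⟩, hsS.2⟩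

theorem nonpos_of_antitone_while_pos {θ : ℝ → ℝ} (hθ : HasLeftLimits θ) (h0 : θ 0 ≤ 0)
    (hanti : ∀ s t : ℝ, 0 ≤ s → s ≤ t → (∀ u ∈ Ioc s t, 0 < θ u) → θ t ≤ θ s)
    (hjump : ∀ t : ℝ, 0 < t → 0 < θ t → ∀ L : ℝ, Tendsto θ (𝓝[<] t) (𝓝 L) → θ t ≤ L)
    {t : ℝ} (ht : 0 ≤ t) : θ t ≤ 0 := by
  by_contra! hpos
  have hε : 0 < θ t / 2 := half_pos hpos
  obtain ⟨σ, ⟨hσ0, hσt⟩, habove, hσ⟩ := exists_last_time_le ht (h0.trans hε.le)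
  by_cases hσε : θ σ ≤ θ t / 2
  · have : θ t ≤ θ σ := hanti σ t hσ0 hσt fun u hu ↦ hε.trans (habove u hu)
    linarith
  have hσpos : 0 < σ := hσ0.lt_of_ne fun h ↦ hσε (h ▸ h0.trans hε.le)
  obtain ⟨L, hL⟩ := hθ σ hσpos
  have hLε : L ≤ θ t / 2 := le_of_tendsto_of_frequently hL (hσ.resolve_left hσε)
  linarith [hjump σ hσpos (hε.trans (not_le.1 hσε)) L hL]

namespace SolvesESP

variable {l r : ℝ → EReal} {ψ φ₁ η₁ φ₂ η₂ : ℝ → ℝ}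

theorem lt_bounds_of_lt (h1 : SolvesESP l r ψ φ₁ η₁) (h2 : SolvesESP l r ψ φ₂ η₂) {s : ℝ}
    (hs : 0 ≤ s) (hlt : η₂ s < η₁ s) : l s < (φ₁ s : EReal) ∧ (φ₂ s : EReal) < r s := by
  obtain ⟨he₁, -, hr₁⟩ := h1.1 s hs
  obtain ⟨he₂, hl₂, -⟩ := h2.1 s hs
  have hφ : (φ₂ s : EReal) < φ₁ s := EReal.coe_lt_coe_iff.2 (by rw [he₁, he₂]; linarith)
  exact ⟨hl₂.trans_lt hφ, hφ.trans_le hr₁⟩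

theorem sub_nonpos (h1 : SolvesESP l r ψ φ₁ η₁) (h2 : SolvesESP l r ψ φ₂ η₂)
    (hη₁ : HasLeftLimits η₁) (hη₂ : HasLeftLimits η₂) {t : ℝ} (ht : 0 ≤ t) :
    η₁ t - η₂ t ≤ 0 := by
  refine nonpos_of_antitone_while_pos (θ := η₁ - η₂) (hη₁.sub hη₂) ?_ ?_ ?_ ht
  · by_contra! h
    rw [Pi.sub_apply] at h
    obtain ⟨hl, hr⟩ := lt_bounds_of_lt h1 h2 le_rfl (sub_pos.1 h)
    linarith [h1.2.2.2.1.2 hl, h2.2.2.2.1.1 hr]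
  · intro s t hs hst hpos
    have hbounds := fun u (hu : u ∈ Ioc s t) ↦
      lt_bounds_of_lt h1 h2 (hs.trans hu.1.le) (sub_pos.1 (hpos u hu))
    have h₁ := h1.2.2.1 s t hs hst fun u hsu hut ↦ (hbounds u ⟨hsu, hut⟩).1
    have h₂ := h2.2.1 s t hs hst fun u hsu hut ↦ (hbounds u ⟨hsu, hut⟩).2
    simp only [Pi.sub_apply]
    linarith
  · intro s hs hpos L hL
    obtain ⟨hl, hr⟩ := lt_bounds_of_lt h1 h2 hs.le (sub_pos.1 hpos)
    obtain ⟨L₁, hL₁⟩ := hη₁ s hs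
    obtain ⟨L₂, hL₂⟩ := hη₂ s hs
    have hL_eq : L = L₁ - L₂ := tendsto_nhds_unique hL (hL₁.sub hL₂)
    simp only [Pi.sub_apply]
    linarith [(h1.2.2.2.2 s hs L₁ hL₁).2 hl, (h2.2.2.2.2 s hs L₂ hL₂).1 hr]

end SolvesESP

theorem esp_uniqueness_general
    (l r : ℝ → EReal)
    (ψ φ₁ η₁ φ₂ η₂ : ℝ → ℝ)
    (hη₁ : Cadlag η₁)
    (hη₂ : Cadlag η₂)
    (h1 : SolvesESP l r ψ φ₁ η₁) (h2 : SolvesESP l r ψ φ₂ η₂) :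
    ∀ t : ℝ, 0 ≤ t → φ₁ t = φ₂ t ∧ η₁ t = η₂ t := by
  intro t ht
  have hle := h1.sub_nonpos h2 hη₁.hasLeftLimits hη₂.hasLeftLimits ht
  have hge := h2.sub_nonpos h1 hη₂.hasLeftLimits hη₁.hasLeftLimits ht
  have hη : η₁ t = η₂ t := by linarith
  rw [(h1.1 t ht).1, (h2.1 t ht).1, hη]
  exact ⟨rfl, rfl⟩

/-- Uniqueness of solutions of the extended Skorokhod problem in a time-dependent
interval `[l(t), r(t)]` for a càdlàg input `ψ`. -/
theorem esp_uniqueness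
    (l r : ℝ → EReal)
    (hl_ne : ∀ t : ℝ, l t ≠ ⊤) (hr_ne : ∀ t : ℝ, r t ≠ ⊥)
    (hlr : ∀ t : ℝ, 0 ≤ t → l t ≤ r t)
    (hl_rc : ∀ t : ℝ, 0 ≤ t → ContinuousWithinAt l (Ici t) t)
    (hr_rc : ∀ t : ℝ, 0 ≤ t → ContinuousWithinAt r (Ici t) t)
    (hl_ll : ∀ t : ℝ, 0 < t → ∃ L : EReal, Tendsto l (nhdsWithin t (Iio t)) (nhds L))
    (hr_ll : ∀ t : ℝ, 0 < t → ∃ L : EReal, Tendsto r (nhdsWithin t (Iio t)) (nhds L))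
    (ψ φ₁ η₁ φ₂ η₂ : ℝ → ℝ)
    (hψ : Cadlag ψ) (hφ₁ : Cadlag φ₁) (hη₁ : Cadlag η₁)
    (hφ₂ : Cadlag φ₂) (hη₂ : Cadlag η₂)
    (h1 : SolvesESP l r ψ φ₁ η₁) (h2 : SolvesESP l r ψ φ₂ η₂) :
    ∀ t : ℝ, 0 ≤ t → φ₁ t = φ₂ t ∧ η₁ t = η₂ t :=
  esp_uniqueness_general l r ψ φ₁ η₁ φ₂ η₂ hη₁ hη₂ h1 h2
end

section
/- One-sided Skorokhod reflection below a moving boundary: given continuous functions ψ, r : [0,∞) → ℝ with ψ(0) ≤ r(0), the function φ(t) := ψ(t) - max(0, sup_{s ≤ t} (ψ(s) - r(s))) satisfies φ(t) ≤ r(t) for all t and φ(t) = ψ(t) + η(t) where η(t) = -max(0, sup_{s ≤ t}(ψ(s) - r(s))) is nonincreasing, η(0) = 0, and η decreases only when φ = r (i.e., η is constant on any interval where φ < r throughout). -/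
/-!
The supremum of `ψ - r` over `[0, t]` splits as the maximum of the supremum over `[0, s]` and of
the value at a point `u ∈ [s, t]` where the supremum over `[s, t]` is attained. If the reflected
path is strictly below `r` on `[s, t]`, then `ψ u - r u` is strictly below the running maximum,
so the new point cannot raise it.
-/

open Set

/-- Running maximum `max(0, sup_{0 ≤ s ≤ t} (ψ(s) - r(s)))`. -/
noncomputable def runMax (ψ r : ℝ → ℝ) (t : ℝ) : ℝ :=
  max 0 (sSup ((fun s => ψ s - r s) '' Icc 0 t))

/-- One-sided Skorokhod reflection of `ψ` below the moving barrier `r`: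
`φ(t) = ψ(t) - max(0, sup_{s ≤ t}(ψ(s) - r(s)))`. -/
noncomputable def reflBelow (ψ r : ℝ → ℝ) (t : ℝ) : ℝ :=
  ψ t - runMax ψ r t

theorem exists_sSup_image_Icc_eq_max {g : ℝ → ℝ} {a s t : ℝ} (hg : ContinuousOn g (Icc a t))
    (has : a ≤ s) (hst : s ≤ t) :
    ∃ u ∈ Icc s t, sSup (g '' Icc a t) = max (sSup (g '' Icc a s)) (g u) := by
  have hleft : IsCompact (g '' Icc a s) :=
    isCompact_Icc.image_of_continuousOn (hg.mono (Icc_subset_Icc_right hst))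
  have hright : IsCompact (g '' Icc s t) :=
    isCompact_Icc.image_of_continuousOn (hg.mono (Icc_subset_Icc_left has))
  obtain ⟨u, hu, hgu⟩ := hright.sSup_mem ((nonempty_Icc.2 hst).image g)
  refine ⟨u, hu, ?_⟩
  rw [← Icc_union_Icc_eq_Icc has hst, image_union, csSup_union hleft.bddAbove
    ((nonempty_Icc.2 has).image g) hright.bddAbove ((nonempty_Icc.2 hst).image g), hgu]

section runMax

variable {ψ r : ℝ → ℝ}

theorem exists_runMax_eq_max (hψ : Continuous ψ) (hr : Continuous r) {s t : ℝ}
    (hs : 0 ≤ s) (hst : s ≤ t) :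
    ∃ u ∈ Icc s t, runMax ψ r t = max (runMax ψ r s) (ψ u - r u) := by
  obtain ⟨u, hu, hsup⟩ := exists_sSup_image_Icc_eq_max (g := fun s => ψ s - r s)
    (hψ.sub hr).continuousOn hs hst
  exact ⟨u, hu, by rw [runMax, runMax, hsup, max_assoc]⟩

theorem runMax_mono (hψ : Continuous ψ) (hr : Continuous r) {s t : ℝ} (hs : 0 ≤ s)
    (hst : s ≤ t) : runMax ψ r s ≤ runMax ψ r t := by
  obtain ⟨u, -, hu⟩ := exists_runMax_eq_max hψ hr hs hst
  exact hu ▸ le_max_left _ _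

theorem runMax_zero (h0 : ψ 0 ≤ r 0) : runMax ψ r 0 = 0 := by
  simp [runMax, h0]

theorem reflBelow_le (hψ : Continuous ψ) (hr : Continuous r) {t : ℝ} (ht : 0 ≤ t) :
    reflBelow ψ r t ≤ r t := by
  have hbdd : BddAbove ((fun s => ψ s - r s) '' Icc 0 t) :=
    (isCompact_Icc.image (hψ.sub hr)).bddAbove
  have hle : ψ t - r t ≤ runMax ψ r t :=
    (le_csSup hbdd ⟨t, ⟨ht, le_rfl⟩, rfl⟩).trans (le_max_right _ _)
  exact sub_le_comm.1 hle

theorem runMax_eq_of_forall_reflBelow_lt (hψ : Continuous ψ) (hr : Continuous r) {s t : ℝ}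
    (hs : 0 ≤ s) (hst : s ≤ t) (hlt : ∀ u, s ≤ u → u ≤ t → reflBelow ψ r u < r u) :
    runMax ψ r t = runMax ψ r s := by
  obtain ⟨u, hu, hmax⟩ := exists_runMax_eq_max hψ hr hs hst
  have hu_lt : ψ u - r u < max (runMax ψ r s) (ψ u - r u) :=
    calc ψ u - r u < runMax ψ r u := sub_lt_comm.1 (hlt u hu.1 hu.2)
      _ ≤ runMax ψ r t := runMax_mono hψ hr (hs.trans hu.1) hu.2
      _ = _ := hmax
  have hu_lt_s : ψ u - r u < runMax ψ r s := (lt_max_iff.1 hu_lt).resolve_right (lt_irrefl _)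
  rw [hmax, max_eq_left hu_lt_s.le]

end runMax

/-- One-sided Skorokhod reflection below a moving boundary: `φ := reflBelow ψ r`
stays at or below `r`, has the form `φ = ψ + η` with `η(t) = -max(0, sup_{s≤t}(ψ(s)-r(s)))`
nonincreasing, `η(0) = 0`, and `η` is constant on any interval on which `φ < r`
throughout. -/
theorem skorokhod_reflection_below (ψ r : ℝ → ℝ)
    (hψ : Continuous ψ) (hr : Continuous r) (h0 : ψ 0 ≤ r 0) :
    (∀ t : ℝ, 0 ≤ t → reflBelow ψ r t ≤ r t) ∧
    (∀ t : ℝ, 0 ≤ t → reflBelow ψ r t = ψ t + (-(runMax ψ r t))) ∧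
    (∀ s t : ℝ, 0 ≤ s → s ≤ t → -(runMax ψ r t) ≤ -(runMax ψ r s)) ∧
    (-(runMax ψ r 0) = 0) ∧
    (∀ s t : ℝ, 0 ≤ s → s ≤ t →
      (∀ u : ℝ, s ≤ u → u ≤ t → reflBelow ψ r u < r u) →
      runMax ψ r t = runMax ψ r s) :=
  ⟨fun _ ht => reflBelow_le hψ hr ht,
    fun _ _ => sub_eq_add_neg _ _,
    fun _ _ hs hst => neg_le_neg (runMax_mono hψ hr hs hst),
    by rw [runMax_zero h0, neg_zero],
    fun _ _ hs hst hlt => runMax_eq_of_forall_reflBelow_lt hψ hr hs hst hlt⟩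
end

section
/- One-sided Skorokhod reflection above a moving boundary: given continuous functions ψ, l : [0,∞) → ℝ with ψ(0) ≥ l(0), the function φ(t) := ψ(t) + max(0, sup_{s ≤ t} (l(s) - ψ(s))) satisfies φ(t) ≥ l(t) for all t, φ - ψ is nondecreasing starting from 0, and φ - ψ is constant on any interval on which φ > l throughout. -/
open Set

/-- One-sided Skorokhod reflection of `ψ` above the moving barrier `l`:
`φ(t) = ψ(t) + max(0, sup_{s ≤ t}(l(s) - ψ(s)))`. -/
noncomputable def reflAbove (ψ l : ℝ → ℝ) (t : ℝ) : ℝ :=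
  ψ t + max 0 (sSup ((fun s => l s - ψ s) '' Icc 0 t))

/-!
The correction `φ - ψ` is `max 0` of the running maximum of `g := l - ψ`, so it dominates `g`
and is nondecreasing. Splitting `[0, t] = [0, s] ∪ [s, t]` and taking a maximiser `u` of `g` on
`[s, t]` gives `(φ - ψ)(t) = max ((φ - ψ)(s)) (g u)`; if `φ > l` on `[s, t]` then
`g u < (φ - ψ)(u) ≤ (φ - ψ)(t)`, so the second argument cannot be the maximum.
-/

noncomputable def skorokhodCorrection (g : ℝ → ℝ) (t : ℝ) : ℝ :=
  max 0 (sSup (g '' Icc 0 t))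

theorem reflAbove_sub_self (ψ l : ℝ → ℝ) (t : ℝ) :
    reflAbove ψ l t - ψ t = skorokhodCorrection (fun s => l s - ψ s) t := by
  rw [reflAbove, skorokhodCorrection, add_sub_cancel_left]

theorem skorokhodCorrection_zero (g : ℝ → ℝ) : skorokhodCorrection g 0 = max 0 (g 0) := by
  rw [skorokhodCorrection, Icc_self, image_singleton, csSup_singleton]

section Continuous

variable {g : ℝ → ℝ} (hg : Continuous g)
include hg

theorem bddAbove_image_Icc (a b : ℝ) : BddAbove (g '' Icc a b) :=
  (isCompact_Icc.image hg).bddAbove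

theorem le_skorokhodCorrection {u t : ℝ} (hu : 0 ≤ u) (hut : u ≤ t) :
    g u ≤ skorokhodCorrection g t :=
  (le_csSup (bddAbove_image_Icc hg 0 t) ⟨u, ⟨hu, hut⟩, rfl⟩).trans (le_max_right _ _)

theorem skorokhodCorrection_mono {s t : ℝ} (hs : 0 ≤ s) (hst : s ≤ t) :
    skorokhodCorrection g s ≤ skorokhodCorrection g t :=
  max_le_max le_rfl <| csSup_le_csSup (bddAbove_image_Icc hg 0 t)
    ((nonempty_Icc.mpr hs).image g) (image_mono (Icc_subset_Icc le_rfl hst))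

theorem exists_skorokhodCorrection_eq_max {s t : ℝ} (hs : 0 ≤ s) (hst : s ≤ t) :
    ∃ u ∈ Icc s t, skorokhodCorrection g t = max (skorokhodCorrection g s) (g u) := by
  obtain ⟨u, hu, hmax⟩ :=
    isCompact_Icc.exists_sSup_image_eq (nonempty_Icc.mpr hst) hg.continuousOn
  refine ⟨u, hu, ?_⟩
  have hsplit : g '' Icc 0 t = g '' Icc 0 s ∪ g '' Icc s t := by
    rw [← image_union, Icc_union_Icc_eq_Icc hs hst]
  rw [skorokhodCorrection, skorokhodCorrection, hsplit,
    csSup_union (bddAbove_image_Icc hg 0 s) ((nonempty_Icc.mpr hs).image g)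
      (bddAbove_image_Icc hg s t) ((nonempty_Icc.mpr hst).image g),
    hmax]
  exact (max_assoc _ _ _).symm

theorem skorokhodCorrection_eq_of_forall_lt {s t : ℝ} (hs : 0 ≤ s) (hst : s ≤ t)
    (hlt : ∀ u ∈ Icc s t, g u < skorokhodCorrection g u) :
    skorokhodCorrection g t = skorokhodCorrection g s := by
  obtain ⟨u, hu, heq⟩ := exists_skorokhodCorrection_eq_max hg hs hst
  have hgu : g u < skorokhodCorrection g t :=
    (hlt u hu).trans_le (skorokhodCorrection_mono hg (hs.trans hu.1) hu.2)
  rw [heq] at hgu ⊢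
  exact max_eq_left (le_of_lt (lt_max_iff.mp hgu |>.resolve_right (lt_irrefl _)))

end Continuous

/-- One-sided Skorokhod reflection above a moving boundary: `φ := reflAbove ψ l`
stays at or above `l`, the correction `φ - ψ` is nondecreasing starting from `0`,
and `φ - ψ` is constant on any interval on which `φ > l` throughout. -/
theorem skorokhod_reflection_above (ψ l : ℝ → ℝ)
    (hψ : Continuous ψ) (hl : Continuous l) (h0 : l 0 ≤ ψ 0) :
    (∀ t : ℝ, 0 ≤ t → l t ≤ reflAbove ψ l t) ∧
    (reflAbove ψ l 0 - ψ 0 = 0) ∧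
    (∀ s t : ℝ, 0 ≤ s → s ≤ t →
      reflAbove ψ l s - ψ s ≤ reflAbove ψ l t - ψ t) ∧
    (∀ s t : ℝ, 0 ≤ s → s ≤ t →
      (∀ u : ℝ, s ≤ u → u ≤ t → l u < reflAbove ψ l u) →
      reflAbove ψ l t - ψ t = reflAbove ψ l s - ψ s) := by
  have hg : Continuous fun s => l s - ψ s := hl.sub hψ
  simp only [reflAbove_sub_self]
  refine ⟨fun t ht => ?_, ?_, fun s t hs hst => skorokhodCorrection_mono hg hs hst,
    fun s t hs hst hlt => skorokhodCorrection_eq_of_forall_lt hg hs hst fun u hu => ?_⟩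
  · have := le_skorokhodCorrection hg ht le_rfl
    rw [← reflAbove_sub_self] at this
    linarith
  · rw [skorokhodCorrection_zero]
    exact max_eq_left (sub_nonpos.mpr h0)
  · have := hlt u hu.1 hu.2
    rw [← reflAbove_sub_self]
    linarith
end

section
/- The sequential update of the interlacing dynamics preserves the state space: if x ∈ GT^(N) and the updated configuration x' is obtained from x by applying the block/push update rules with increments δ_i^j ∈ {-1, 0, 1} (a particle attempting to jump right is blocked if its upper-left neighbor on level below sits at x_i^{k-1} = x_i^k + 1 after update; attempting to jump left is blocked if x_{i-1}^{k-1} = x_i^k after update; a particle at x_i^k = x_{i-1}^{k-1}(new) - 1 is pushed right; a particle at x_i^k = x_i^{k-1}(new) is pushed left), then x' ∈ GT^(N). -/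
/-!
Induct on the number of levels. On the top level, the two upper neighbours of a particle have
already been updated, are strictly ordered, and have each moved by at most one step. So either
the particle keeps its distance from both under any move by one, or it is at distance zero or one
from one of them, and then the push and block rules fire exactly so as to restore interlacing;
the rules belonging to the other neighbour cannot interfere, since the neighbours are strictly
ordered.
-/

/-- `x` is an integer Gelfand–Tsetlin pattern of size `N`. -/
def IsGT (N : ℕ) (x : ℕ → ℕ → ℤ) : Prop :=
  ∀ i j : ℕ, 2 ≤ i → i ≤ j → j ≤ N →
    x (i - 1) j < x (i - 1) (j - 1) ∧ x (i - 1) (j - 1) ≤ x i j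

namespace IsGT

variable {N : ℕ} {x : ℕ → ℕ → ℤ}

theorem mono {M : ℕ} (hx : IsGT N x) (hMN : M ≤ N) : IsGT M x :=
  fun i j hi hij hjM => hx i j hi hij (hjM.trans hMN)

theorem row_lt {i j : ℕ} (hx : IsGT N x) (hi : 2 ≤ i) (hij : i ≤ j) (hjN : j ≤ N) :
    x (i - 1) j < x i j :=
  (hx i j hi hij hjN).1.trans_le (hx i j hi hij hjN).2

theorem succ (hx : IsGT N x)
    (htop : ∀ i, 2 ≤ i → i ≤ N + 1 →
      x (i - 1) (N + 1) < x (i - 1) N ∧ x (i - 1) N ≤ x i (N + 1)) :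
    IsGT (N + 1) x := by
  intro i j hi hij hjN
  rcases Nat.lt_or_eq_of_le hjN with hjN | rfl
  · exact hx i j hi hij (Nat.lt_succ_iff.mp hjN)
  · exact htop i hi hij

end IsGT

/-- New position of a particle at `y` with increment `d`, whose upper-left and upper-right
neighbours on the level below sit, after their update, at `left` and `right`; the flags say
whether these neighbours exist. -/
def pushBlockUpdate (hasLeft hasRight : Prop) [Decidable hasLeft] [Decidable hasRight]
    (left right y d : ℤ) : ℤ :=
  if hasLeft ∧ y = left - 1 then y + 1
  else if hasRight ∧ y = right then y - 1
  else if d = 1 then (if hasRight ∧ right = y + 1 then y else y + 1)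
  else if d = -1 then (if hasLeft ∧ left = y then y else y - 1)
  else y

section pushBlockUpdate

variable {hasLeft hasRight : Prop} [Decidable hasLeft] [Decidable hasRight] {left right y d : ℤ}

theorem pushBlockUpdate_mem_Icc :
    pushBlockUpdate hasLeft hasRight left right y d ∈ Set.Icc (y - 1) (y + 1) := by
  unfold pushBlockUpdate
  constructor <;> split_ifs <;> omega

theorem pushBlockUpdate_lt_right (hR : hasRight) (hLR : hasLeft → left < right)
    (hy : y ≤ right) : pushBlockUpdate hasLeft hasRight left right y d < right := by
  unfold pushBlockUpdate
  split_ifs <;> grind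

theorem left_le_pushBlockUpdate (hL : hasLeft) (hLR : hasRight → left < right)
    (hy : left ≤ y + 1) : left ≤ pushBlockUpdate hasLeft hasRight left right y d := by
  unfold pushBlockUpdate
  split_ifs <;> grind

end pushBlockUpdate

theorem update_preserves_GT_general (N : ℕ) (x x' : ℕ → ℕ → ℤ) (δ : ℕ → ℕ → ℤ)
    (hx : IsGT N x)
    (hupd : ∀ i k : ℕ, 1 ≤ i → i ≤ k → k ≤ N →
      x' i k =
        if 1 < i ∧ x i k = x' (i - 1) (k - 1) - 1 then x i k + 1
        else if i < k ∧ x i k = x' i (k - 1) then x i k - 1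
        else if δ i k = 1 then
          (if i < k ∧ x' i (k - 1) = x i k + 1 then x i k else x i k + 1)
        else if δ i k = -1 then
          (if 1 < i ∧ x' (i - 1) (k - 1) = x i k then x i k else x i k - 1)
        else x i k) :
    IsGT N x' := by
  induction N with
  | zero => intro i j hi hij hj; omega
  | succ n ih =>
    have hx' : IsGT n x' :=
      ih (hx.mono n.le_succ) fun i k hi hik hkn => hupd i k hi hik (hkn.trans n.le_succ)
    refine hx'.succ fun i hi hin => ?_
    have hupdTop : ∀ i, 1 ≤ i → i ≤ n + 1 → x' i (n + 1) =
        pushBlockUpdate (1 < i) (i < n + 1) (x' (i - 1) n) (x' i n) (x i (n + 1)) (δ i (n + 1)) :=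
      fun i hi hin => hupd i (n + 1) hi hin le_rfl
    obtain ⟨hmid_ge, hmid_le⟩ : x' (i - 1) n ∈ Set.Icc (x (i - 1) n - 1) (x (i - 1) n + 1) := by
      rw [hupd (i - 1) n (by omega) (by omega) n.le_succ]
      exact pushBlockUpdate_mem_Icc
    have hold : x (i - 1) (n + 1) < x (i - 1) n ∧ x (i - 1) n ≤ x i (n + 1) :=
      hx i (n + 1) hi hin le_rfl
    rw [hupdTop (i - 1) (by omega) (by omega), hupdTop i (by omega) hin]
    constructor
    · refine pushBlockUpdate_lt_right (by omega) (fun _ => ?_) (by omega)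
      exact hx'.row_lt (i := i - 1) (by omega) (by omega) le_rfl
    · exact left_le_pushBlockUpdate (by omega)
        (fun _ => hx'.row_lt hi (by omega) le_rfl) (by omega)

/-- The sequential block/push update of the interlacing dynamics preserves the state
space `GT^(N)`: the configuration `x'`, obtained from `x ∈ GT^(N)` by applying, level
by level, first the pushing rules (a particle at `x_i^k = x'_{i-1}^{k-1} - 1` is pushed
right, a particle at `x_i^k = x'_i^{k-1}` is pushed left) and then its own increment
`δ_i^k ∈ {-1,0,1}` subject to blocking (a right jump is blocked if
`x'_i^{k-1} = x_i^k + 1`, a left jump is blocked if `x'_{i-1}^{k-1} = x_i^k`),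
again belongs to `GT^(N)`. -/
theorem update_preserves_GT (N : ℕ) (x x' : ℕ → ℕ → ℤ) (δ : ℕ → ℕ → ℤ)
    (hx : IsGT N x)
    (hδ : ∀ i k : ℕ, δ i k = -1 ∨ δ i k = 0 ∨ δ i k = 1)
    (hupd : ∀ i k : ℕ, 1 ≤ i → i ≤ k → k ≤ N →
      x' i k =
        if 1 < i ∧ x i k = x' (i - 1) (k - 1) - 1 then x i k + 1
        else if i < k ∧ x i k = x' i (k - 1) then x i k - 1
        else if δ i k = 1 then
          (if i < k ∧ x' i (k - 1) = x i k + 1 then x i k else x i k + 1)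
        else if δ i k = -1 then
          (if 1 < i ∧ x' (i - 1) (k - 1) = x i k then x i k else x i k - 1)
        else x i k) :
    IsGT N x' :=
  update_preserves_GT_general N x x' δ hx hupd
end
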